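/- arXiv:1310.5093 — 3 statements merged into one kernel-verified Lean document; each statement's English description precedes it below -/
import Mathlib

section
/- For every integer r ≥ 1 and every real x ≥ 0, lim_{n→∞} n^r·η_{2r}^{(n)}(x) = (−1)^r·X^r / (2^r·r!), where X = x(1+x). -/
open Filter Topology Finset

/-- Baskakov basis functions `v_{k,n}(x) = C(n+k-1, k) x^k (1+x)^{-(n+k)}`. -/
noncomputable def baskakovBasis (n k : ℕ) (x : ℝ) : ℝ :=
  (Nat.choose (n + k - 1) k : ℝ) * x ^ k / (1 + x) ^ (n + k)

/-- Baskakov operator `(V_n f)(x) = Σ_{k≥0} f(k/n) v_{k,n}(x)`. -/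
noncomputable def baskakov (n : ℕ) (f : ℝ → ℝ) (x : ℝ) : ℝ :=
  ∑' k : ℕ, f ((k : ℝ) / n) * baskakovBasis n k x

/-- Polynomials θ_r^{(n)}: θ_0 = 1, θ_1 = 0 and
`n (r+1) θ_{r+1} = X (θ_r' + θ_{r-1})` for r ≥ 1, with X = x(1+x). -/
noncomputable def theta (n : ℕ) : ℕ → ℝ → ℝ
  | 0 => fun _ => 1
  | 1 => fun _ => 0
  | r + 2 => fun x =>
      x * (1 + x) * (deriv (theta n (r + 1)) x + theta n r x) / (n * (r + 2))

/-- Polynomials η_r^{(n)}: η_0 = 1, η_1 = 0 and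
`(n+r)(r+1) η_{r+1} = -r(1+2x) η_r - X η_{r-1}` for r ≥ 1, with X = x(1+x). -/
noncomputable def eta (n : ℕ) : ℕ → ℝ → ℝ
  | 0 => fun _ => 1
  | 1 => fun _ => 0
  | r + 2 => fun x =>
      (-((r + 1 : ℝ) * (1 + 2 * x) * eta n (r + 1) x) - x * (1 + x) * eta n r x) /
        (((n : ℝ) + (r + 1)) * (r + 2))

/-- Rising factorial `(n)_r = n (n+1) ⋯ (n+r-1)`. -/
def risingFactorial (n r : ℕ) : ℕ := ∏ i ∈ Finset.range r, (n + i)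

/-! Both `n^m η_{2m}^{(n)}` and `n^{m+1} η_{2m+1}^{(n)}` converge, by a joint induction on `m`.
In the recurrence for `η_{2m+2}` the odd term `η_{2m+1}` carries an extra factor `1/(n+2m+1)`,
so after scaling by `n^{m+1}` it drops out in the limit and only `-X η_{2m}/(2m+2)` survives:
each even limit is `-X/(2(m+1))` times the previous one. Of the odd limits only their existence
matters. -/

lemma tendsto_inv_natCast_add_atTop (c : ℝ) :
    Tendsto (fun n : ℕ => ((n : ℝ) + c)⁻¹) atTop (𝓝 0) :=
  tendsto_inv_atTop_zero.comp (tendsto_atTop_add_const_right _ c tendsto_natCast_atTop_atTop)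

noncomputable def etaEvenLimit (x : ℝ) (m : ℕ) : ℝ :=
  (-1 : ℝ) ^ m * (x * (1 + x)) ^ m / (2 ^ m * (Nat.factorial m : ℝ))

noncomputable def etaOddLimit (x : ℝ) : ℕ → ℝ
  | 0 => 0
  | m + 1 =>
      (-((2 * m + 2 : ℝ) * (1 + 2 * x) * etaEvenLimit x (m + 1)) - x * (1 + x) * etaOddLimit x m) /
        (2 * m + 3)

lemma etaEvenLimit_succ (x : ℝ) (m : ℕ) :
    etaEvenLimit x (m + 1) = -(x * (1 + x)) * etaEvenLimit x m / (2 * m + 2) := by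
  simp only [etaEvenLimit, pow_succ, Nat.factorial_succ]
  push_cast
  field_simp

lemma eta_even_scaled_succ (n m : ℕ) (x : ℝ) :
    (n : ℝ) ^ (m + 1) * eta n (2 * m + 2) x =
      (-((2 * m + 1 : ℝ) * (1 + 2 * x)) * ((n : ℝ) ^ (m + 1) * eta n (2 * m + 1) x) *
          ((n : ℝ) + (2 * m + 1))⁻¹ -
        x * (1 + x) * ((n : ℝ) ^ m * eta n (2 * m) x) * ((n : ℝ) / ((n : ℝ) + (2 * m + 1)))) /
        (2 * m + 2) := by
  have hpos : (0 : ℝ) < (n : ℝ) + (2 * m + 1) := by positivity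
  simp only [eta]
  push_cast
  field_simp
  ring

lemma eta_odd_scaled_succ (n m : ℕ) (x : ℝ) :
    (n : ℝ) ^ (m + 2) * eta n (2 * m + 3) x =
      (-((2 * m + 2 : ℝ) * (1 + 2 * x)) * ((n : ℝ) ^ (m + 1) * eta n (2 * m + 2) x) -
        x * (1 + x) * ((n : ℝ) ^ (m + 1) * eta n (2 * m + 1) x)) *
        ((n : ℝ) / ((n : ℝ) + (2 * m + 2))) / (2 * m + 3) := by
  have hpos : (0 : ℝ) < (n : ℝ) + (2 * m + 2) := by positivity
  simp only [eta]
  push_cast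
  field_simp
  ring

lemma tendsto_eta_scaled (x : ℝ) (m : ℕ) :
    Tendsto (fun n : ℕ => (n : ℝ) ^ m * eta n (2 * m) x) atTop (𝓝 (etaEvenLimit x m)) ∧
      Tendsto (fun n : ℕ => (n : ℝ) ^ (m + 1) * eta n (2 * m + 1) x) atTop
        (𝓝 (etaOddLimit x m)) := by
  induction m with
  | zero => simp [eta, etaEvenLimit, etaOddLimit]
  | succ m ih =>
    obtain ⟨hEven, hOdd⟩ := ih
    rw [show 2 * (m + 1) = 2 * m + 2 by ring, show 2 * m + 2 + 1 = 2 * m + 3 by ring]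
    have hEven' : Tendsto (fun n : ℕ => (n : ℝ) ^ (m + 1) * eta n (2 * m + 2) x) atTop
        (𝓝 (etaEvenLimit x (m + 1))) := by
      simp_rw [eta_even_scaled_succ]
      convert (((tendsto_const_nhds.mul hOdd).mul (tendsto_inv_natCast_add_atTop _)).sub
        ((tendsto_const_nhds.mul hEven).mul (tendsto_natCast_div_add_atTop _))).div_const _
        using 2
      rw [etaEvenLimit_succ]
      ring
    refine ⟨hEven', ?_⟩
    simp_rw [eta_odd_scaled_succ]
    convert (((tendsto_const_nhds.mul hEven').sub (tendsto_const_nhds.mul hOdd)).mul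
      (tendsto_natCast_div_add_atTop _)).div_const _ using 2
    rw [etaOddLimit]
    ring

theorem eta_even_asymptotics_general (r : ℕ) (x : ℝ) :
    Filter.Tendsto (fun n : ℕ => (n : ℝ) ^ r * eta n (2 * r) x) Filter.atTop
      (nhds ((-1 : ℝ) ^ r * (x * (1 + x)) ^ r / (2 ^ r * (Nat.factorial r : ℝ)))) :=
  (tendsto_eta_scaled x r).1

/-- `lim_{n→∞} n^r η_{2r}^{(n)}(x) = (-1)^r X^r / (2^r r!)`. -/
theorem eta_even_asymptotics (r : ℕ) (hr : 1 ≤ r) (x : ℝ) (hx : 0 ≤ x) :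
    Filter.Tendsto (fun n : ℕ => (n : ℝ) ^ r * eta n (2 * r) x) Filter.atTop
      (nhds ((-1 : ℝ) ^ r * (x * (1 + x)) ^ r / (2 ^ r * (Nat.factorial r : ℝ)))) :=
  eta_even_asymptotics_general r x
end

section
/- Let n ≥ 1 and r ≥ 0 be integers and let ν_{r,n}(t) = ∏_{i=0}^{r-1} (t − i/n) be the Newton polynomial (with ν_{0,n} = 1). Then for every real x ≥ 0 the series Σ_{k=0}^∞ ν_{r,n}(k/n)·v_{k,n}(x) converges absolutely and equals ((n)_r / n^r)·x^r, where (n)_r = n(n+1)⋯(n+r-1) is the rising factorial. In particular, the Baskakov operator V_n maps a polynomial of degree r to a polynomial of degree r, and V_n reproduces the constant function 1 and the identity function x. -/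
/-!
Writing `ν_{r,n}(k/n) = k(k-1)⋯(k-r+1) / n^r`, the key identity is
`k(k-1)⋯(k-r+1) · v_{k,n}(x) = (n)_r · x^r · v_{k-r,n+r}(x)`, a rearrangement of factorials.
Shifting the summation index by `r` therefore reduces everything to `Σ_k v_{k,n+r}(x) = 1`,
which is the negative binomial series `Σ_k C(m+k,k) y^k = (1-y)^{-(m+1)}` at `y = x/(1+x)`.
-/

open Filter Topology Finset

theorem risingFactorial_eq_ascFactorial (n r : ℕ) : risingFactorial n r = n.ascFactorial r :=
  (Nat.ascFactorial_eq_prod_range n r).symm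

theorem Nat.descFactorial_mul_choose_eq_ascFactorial_mul_choose (n r j : ℕ) :
    (j + r).descFactorial r * (n + (j + r) - 1).choose (j + r) =
      n.ascFactorial r * (n + r + j - 1).choose j := by
  -- with `N = n + j + r - 1`, both sides are `r! · C(N, j) · C(n + r - 1, r)`
  have hchoose := Nat.choose_mul (n := n + (j + r) - 1) (k := j + r) (Nat.le_add_right j r)
  rw [Nat.add_sub_cancel_left, show n + (j + r) - 1 - j = n + r - 1 by omega] at hchoose
  rw [Nat.descFactorial_eq_factorial_mul_choose, Nat.ascFactorial_eq_factorial_mul_choose',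
    ← Nat.choose_symm_add, show n + r + j - 1 = n + (j + r) - 1 by omega]
  calc r.factorial * (j + r).choose j * (n + (j + r) - 1).choose (j + r)
      = r.factorial * ((n + (j + r) - 1).choose (j + r) * (j + r).choose j) := by ring
    _ = r.factorial * (n + r - 1).choose r * (n + (j + r) - 1).choose j := by rw [hchoose]; ring

theorem descFactorial_mul_baskakovBasis (n r j : ℕ) (x : ℝ) :
    ((j + r).descFactorial r : ℝ) * baskakovBasis n (j + r) x =
      n.ascFactorial r * x ^ r * baskakovBasis (n + r) j x := by
  have hnat := congrArg (Nat.cast (R := ℝ))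
    (Nat.descFactorial_mul_choose_eq_ascFactorial_mul_choose n r j)
  push_cast at hnat
  rw [baskakovBasis, baskakovBasis, pow_add x j r,
    show (1 + x) ^ (n + (j + r)) = (1 + x) ^ (n + r + j) by ring_nf]
  linear_combination x ^ j * x ^ r / (1 + x) ^ (n + r + j) * hnat

theorem hasSum_baskakovBasis {n : ℕ} (hn : n ≠ 0) {x : ℝ} (hx : 0 ≤ x) :
    HasSum (fun k ↦ baskakovBasis n k x) 1 := by
  obtain ⟨m, rfl⟩ := Nat.exists_eq_add_one_of_ne_zero hn
  have hx₁ : 0 < 1 + x := by linarith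
  have hx₀ : 1 + x ≠ 0 := hx₁.ne'
  have hy : ‖x / (1 + x)‖ < 1 := by
    rw [Real.norm_of_nonneg (by positivity), div_lt_one hx₁]
    linarith
  have hterm (k : ℕ) : baskakovBasis (m + 1) k x =
      ((1 + x) ^ (m + 1))⁻¹ * ((k + m).choose m * (x / (1 + x)) ^ k) := by
    rw [baskakovBasis, show m + 1 + k - 1 = k + m by omega, Nat.choose_symm_add, div_pow,
      pow_add]
    field_simp
  have hsum : ((1 + x) ^ (m + 1))⁻¹ * (1 / (1 - x / (1 + x)) ^ (m + 1)) = 1 := by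
    rw [one_sub_div hx₀, add_sub_cancel_right, one_div_pow, one_div_one_div,
      inv_mul_cancel₀ (pow_ne_zero _ hx₀)]
  simpa only [hterm, hsum] using
    (hasSum_choose_mul_geometric_of_norm_lt_one m hy).mul_left ((1 + x) ^ (m + 1))⁻¹

theorem hasSum_descFactorial_mul_baskakovBasis {n : ℕ} (hn : n ≠ 0) (r : ℕ) {x : ℝ}
    (hx : 0 ≤ x) :
    HasSum (fun k ↦ (k.descFactorial r : ℝ) * baskakovBasis n k x)
      (n.ascFactorial r * x ^ r) := by
  have hshift := (hasSum_baskakovBasis (n := n + r) (by omega) hx).mul_left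
    ((n.ascFactorial r : ℝ) * x ^ r)
  simp only [← descFactorial_mul_baskakovBasis, mul_one] at hshift
  rw [← hasSum_nat_add_iff' r, sum_eq_zero, sub_zero]
  · exact hshift
  · intro k hk
    rw [Nat.descFactorial_eq_zero_iff_lt.mpr (mem_range.mp hk), Nat.cast_zero, zero_mul]

theorem prod_range_natCast_div_sub_div (k n r : ℕ) :
    ∏ i ∈ range r, ((k : ℝ) / n - (i : ℝ) / n) = k.descFactorial r / (n : ℝ) ^ r := by
  simp only [div_sub_div_same, prod_div_distrib, prod_const, card_range,
    ← descPochhammer_eval_eq_prod_range, descPochhammer_eval_eq_descFactorial]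

theorem hasSum_newton_mul_baskakovBasis {n : ℕ} (hn : n ≠ 0) (r : ℕ) {x : ℝ}
    (hx : 0 ≤ x) :
    HasSum
      (fun k : ℕ ↦ (∏ i ∈ range r, ((k : ℝ) / n - (i : ℝ) / n)) * baskakovBasis n k x)
      ((risingFactorial n r : ℝ) / (n : ℝ) ^ r * x ^ r) := by
  have hterm (k : ℕ) :
      (∏ i ∈ range r, ((k : ℝ) / n - (i : ℝ) / n)) * baskakovBasis n k x =
        k.descFactorial r * baskakovBasis n k x / (n : ℝ) ^ r := by
    rw [prod_range_natCast_div_sub_div]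
    ring
  have hvalue : (n.ascFactorial r : ℝ) * x ^ r / (n : ℝ) ^ r =
      (risingFactorial n r : ℝ) / (n : ℝ) ^ r * x ^ r := by
    rw [risingFactorial_eq_ascFactorial]
    ring
  simpa only [hterm, hvalue] using
    (hasSum_descFactorial_mul_baskakovBasis hn r hx).div_const ((n : ℝ) ^ r)

/-- `V_n` maps the Newton polynomial `ν_{r,n}(t) = Π_{i<r}(t - i/n)` to
`((n)_r / n^r) x^r`, the series converging absolutely; in particular `V_n` reproduces
`1` and `x`. -/
theorem baskakov_newton_polynomials (n : ℕ) (hn : 1 ≤ n) (r : ℕ) (x : ℝ) (hx : 0 ≤ x) :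
    Summable (fun k : ℕ =>
      |(∏ i ∈ Finset.range r, ((k : ℝ) / n - (i : ℝ) / n)) * baskakovBasis n k x|) ∧
    ∑' k : ℕ, (∏ i ∈ Finset.range r, ((k : ℝ) / n - (i : ℝ) / n)) * baskakovBasis n k x
      = ((risingFactorial n r : ℝ) / (n : ℝ) ^ r) * x ^ r ∧
    ∑' k : ℕ, baskakovBasis n k x = 1 ∧
    ∑' k : ℕ, ((k : ℝ) / n) * baskakovBasis n k x = x := by
  have hn₀ : n ≠ 0 := Nat.one_le_iff_ne_zero.mp hn
  have hnewton := hasSum_newton_mul_baskakovBasis hn₀ r hx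
  refine ⟨hnewton.summable.abs, hnewton.tsum_eq, (hasSum_baskakovBasis hn₀ hx).tsum_eq, ?_⟩
  simpa [risingFactorial, hn₀] using (hasSum_newton_mul_baskakovBasis hn₀ 1 hx).tsum_eq
end

section
/- Let n ≥ 1, p ≥ 0 and k ≥ 0 be integers. Then for every real x > 0, the p-th derivative of the Baskakov basis function satisfies D^p v_{k,n}(x) = (−1)^p·(n)_p·(Δ^p v_{·,n+p})_{k-p}(x), i.e. D^p v_{k,n}(x) = (−1)^p·(n)_p·Σ_{i=0}^{p} (−1)^{p-i}·binom(p,i)·v_{k-p+i,n+p}(x), with the convention v_{j,m} = 0 whenever j < 0, and where (n)_p = n(n+1)⋯(n+p-1) is the rising factorial. -/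
open Filter Topology Finset

/-- Baskakov basis functions indexed by an integer, vanishing for negative index. -/
noncomputable def baskakovBasisZ (n : ℕ) (j : ℤ) (x : ℝ) : ℝ :=
  if 0 ≤ j then baskakovBasis n j.toNat x else 0

/-! Differentiating `v_{k,n} = C(n+k-1,k) x^k (1+x)^{-(n+k)}` and absorbing the factors `k` and
`n+k` into the binomial coefficient via `k C(n+k-1,k) = n C(n+k-1,k-1)` and
`(n+k) C(n+k-1,k) = n C(n+k,k)` gives
`D v_{k,n} = n (v_{k-1,n+1} - v_{k,n+1}) = -n Δ v_{k-1,n+1}`.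
Differentiation in `x` commutes with forward differences in the index, so induction on `p` gives
`D^p v_{k,n} = (-1)^p (n)_p (Δ^p v_{·,n+p})(k-p)`, and `Δ^p` expands binomially. -/

open fwdDiff

theorem hasDerivAt_fwdDiff_iter {M 𝕜 E : Type*} [AddCommMonoid M] [NontriviallyNormedField 𝕜]
    [NormedAddCommGroup E] [NormedSpace 𝕜 E] {F : M → 𝕜 → E} {F' : M → E} {x : 𝕜} (h : M)
    (hF : ∀ i, HasDerivAt (F i) (F' i) x) (p : ℕ) (j : M) :
    HasDerivAt (fun y => (Δ_[h])^[p] (fun i => F i y) j) ((Δ_[h])^[p] F' j) x := by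
  induction p generalizing F F' with
  | zero => exact hF j
  | succ p ih => exact ih fun i => (hF (i + h)).sub (hF i)

theorem hasDerivAt_pow_div_one_add_pow (k m : ℕ) {x : ℝ} (hx : 1 + x ≠ 0) :
    HasDerivAt (fun y => y ^ k / (1 + y) ^ m)
      (k * x ^ (k - 1) / (1 + x) ^ m - m * x ^ k / (1 + x) ^ (m + 1)) x := by
  refine ((hasDerivAt_pow k x).fun_div (((hasDerivAt_id' x).const_add 1).fun_pow m)
    (pow_ne_zero m hx)).congr_deriv ?_
  rcases m with _ | m
  · simp
  · rw [Nat.add_sub_cancel]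
    field_simp
    ring

theorem choose_add_succ_mul_succ (n j : ℕ) :
    (n + j).choose (j + 1) * (j + 1) = n * (n + j).choose j := by
  rw [Nat.choose_succ_right_eq, Nat.add_sub_cancel, mul_comm]

theorem add_mul_choose_add_sub_one (n k : ℕ) :
    (n + k) * (n + k - 1).choose k = n * (n + k).choose k := by
  rcases h : n + k with _ | m
  · simp [show n = 0 by omega]
  · rw [Nat.add_sub_cancel, mul_comm, Nat.choose_mul_succ_eq, ← h, Nat.add_sub_cancel, mul_comm]

theorem risingFactorial_succ (n p : ℕ) :
    risingFactorial n (p + 1) = risingFactorial n p * (n + p) :=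
  prod_range_succ _ p

theorem baskakovBasisZ_natCast (n k : ℕ) : baskakovBasisZ n k = baskakovBasis n k := by
  funext x
  simp [baskakovBasisZ]

theorem baskakovBasisZ_of_neg (n : ℕ) {j : ℤ} (hj : j < 0) : baskakovBasisZ n j = 0 := by
  funext x
  simp [baskakovBasisZ, hj]

theorem hasDerivAt_baskakovBasis (n k : ℕ) {x : ℝ} (hx : 1 + x ≠ 0) :
    HasDerivAt (baskakovBasis n k)
      (n * (baskakovBasisZ (n + 1) (k - 1) x - baskakovBasis (n + 1) k x)) x := by
  have hv : baskakovBasis n k =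
      fun y : ℝ => ((n + k - 1).choose k : ℝ) * (y ^ k / (1 + y) ^ (n + k)) := by
    funext y
    rw [baskakovBasis, mul_div_assoc]
  rw [hv]
  refine ((hasDerivAt_pow_div_one_add_pow k (n + k) hx).const_mul
    ((n + k - 1).choose k : ℝ)).congr_deriv ?_
  have hpow_term : ((n + k - 1).choose k : ℝ) * (k * x ^ (k - 1) / (1 + x) ^ (n + k))
      = n * baskakovBasisZ (n + 1) (k - 1) x := by
    rcases k with _ | j
    · simp [baskakovBasisZ_of_neg]
    · have hj : ((j + 1 : ℕ) : ℤ) - 1 = j := by push_cast; ring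
      have hc : ((n + j).choose (j + 1) : ℝ) * (j + 1) = n * (n + j).choose j := by
        exact_mod_cast choose_add_succ_mul_succ n j
      rw [hj, baskakovBasisZ_natCast, baskakovBasis, Nat.add_sub_cancel,
        show n + (j + 1) - 1 = n + j by omega, show n + 1 + j - 1 = n + j by omega,
        show n + (j + 1) = n + 1 + j by omega]
      push_cast
      linear_combination x ^ j / (1 + x) ^ (n + 1 + j) * hc
  have hden_term : ((n + k - 1).choose k : ℝ) * ((n + k : ℕ) * x ^ k / (1 + x) ^ (n + k + 1))
      = n * baskakovBasis (n + 1) k x := by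
    have hc : ((n + k : ℕ) : ℝ) * (n + k - 1).choose k = n * (n + k).choose k := by
      exact_mod_cast add_mul_choose_add_sub_one n k
    rw [baskakovBasis, show n + 1 + k - 1 = n + k by omega, show n + 1 + k = n + k + 1 by omega]
    linear_combination x ^ k / (1 + x) ^ (n + k + 1) * hc
  linear_combination hpow_term - hden_term

theorem hasDerivAt_baskakovBasisZ (n : ℕ) (j : ℤ) {x : ℝ} (hx : 1 + x ≠ 0) :
    HasDerivAt (baskakovBasisZ n j)
      (-(n * Δ_[1] (fun i => baskakovBasisZ (n + 1) i x) (j - 1))) x := by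
  rcases lt_or_ge j 0 with hj | hj
  · rw [baskakovBasisZ_of_neg n hj]
    simp [fwdDiff, baskakovBasisZ_of_neg _ hj, baskakovBasisZ_of_neg _ (by omega : j - 1 < 0)]
  · lift j to ℕ using hj
    rw [baskakovBasisZ_natCast]
    convert hasDerivAt_baskakovBasis n j hx using 1
    simp only [fwdDiff, sub_add_cancel, baskakovBasisZ_natCast]
    ring

theorem iteratedDeriv_baskakovBasis (n p k : ℕ) {x : ℝ} (hx : 1 + x ≠ 0) :
    iteratedDeriv p (baskakovBasis n k) x
      = (-1) ^ p * risingFactorial n p *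
          (Δ_[1])^[p] (fun i => baskakovBasisZ (n + p) i x) (k - p) := by
  induction p generalizing x with
  | zero => simp [risingFactorial, baskakovBasisZ_natCast]
  | succ p ih =>
    have hnear : iteratedDeriv p (baskakovBasis n k) =ᶠ[𝓝 x] fun y =>
        (-1) ^ p * risingFactorial n p *
          (Δ_[1])^[p] (fun i => baskakovBasisZ (n + p) i y) (k - p) :=
      (continuous_const.add continuous_id).continuousAt.eventually_ne hx |>.mono fun y hy => ih hy
    rw [iteratedDeriv_succ, hnear.deriv_eq, (((hasDerivAt_fwdDiff_iter 1
      (fun i => hasDerivAt_baskakovBasisZ (n + p) i hx) p (k - p)).const_mul _)).deriv]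
    set g : ℤ → ℝ := fun i => baskakovBasisZ (n + p + 1) i x
    have hsmul : (fun i : ℤ => -((n + p : ℕ) * Δ_[1] g (i - 1)))
        = (-((n + p : ℕ) : ℝ)) • fun i => Δ_[1] g (i + -1) := by
      funext i
      rw [Pi.smul_apply, smul_eq_mul, sub_eq_add_neg, neg_mul]
    have hg : (fun i => baskakovBasisZ (n + (p + 1)) i x) = g := rfl
    rw [hsmul, fwdDiff_iter_const_smul, Pi.smul_apply, fwdDiff_iter_comp_add, hg,
      Function.iterate_succ_apply, smul_eq_mul, risingFactorial_succ,
      show (k : ℤ) - p + -1 = k - (p + 1 : ℕ) by push_cast; ring]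
    push_cast
    ring

theorem baskakov_basis_derivative_general (n : ℕ) (p k : ℕ) (x : ℝ) (hx : 0 < x) :
    iteratedDeriv p (baskakovBasis n k) x
      = (-1 : ℝ) ^ p * (risingFactorial n p : ℝ) *
          ∑ i ∈ Finset.range (p + 1),
            (-1 : ℝ) ^ (p - i) * (Nat.choose p i : ℝ) *
              baskakovBasisZ (n + p) ((k : ℤ) - p + i) x := by
  rw [iteratedDeriv_baskakovBasis n p k (by positivity), fwdDiff_iter_eq_sum_shift]
  simp [zsmul_eq_mul]

/-- `D^p v_{k,n} = (-1)^p (n)_p Δ^p v_{k-p,n+p}`, i.e.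
`D^p v_{k,n}(x) = (-1)^p (n)_p Σ_{i=0}^p (-1)^{p-i} C(p,i) v_{k-p+i,n+p}(x)`. -/
theorem baskakov_basis_derivative (n : ℕ) (hn : 1 ≤ n) (p k : ℕ) (x : ℝ) (hx : 0 < x) :
    iteratedDeriv p (baskakovBasis n k) x
      = (-1 : ℝ) ^ p * (risingFactorial n p : ℝ) *
          ∑ i ∈ Finset.range (p + 1),
            (-1 : ℝ) ^ (p - i) * (Nat.choose p i : ℝ) *
              baskakovBasisZ (n + p) ((k : ℤ) - p + i) x :=
  baskakov_basis_derivative_general n p k x hx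
end
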